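/- For the Plackett copula with parameter \theta > 0, \theta \ne 1, Spearman's rho equals \rho = (\theta+1)/(\theta-1) - 2\theta\log\theta/(\theta-1)^2, where \rho = 12\int_{[0,1]^2} C_\theta(u,v)\, du\, dv - 3. -/

import Mathlib

open MeasureTheory Filter

/-- The bivariate Plackett copula with parameter `θ` (`η = θ - 1`). -/
noncomputable def plackett (θ u v : ℝ) : ℝ :=
  (1 + (θ - 1) * (u + v)
      - Real.sqrt ((1 + (θ - 1) * (u + v)) ^ 2 - 4 * θ * (θ - 1) * u * v))
    / (2 * (θ - 1))

/-!
For fixed `u ∈ (0,1)`, completing the square in `v` writes the discriminant of `C_θ(u, ·)` as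
`(ηv + 1 - (θ+1)u)² + 4θu(1-u)`, so the inner integral is elementary:
`∫ √(x² + c) dx = (x √(x² + c) + c log (x + √(x² + c))) / 2`.
At `v = 0` and `v = 1` the square roots are `1 + ηu` and `θ - ηu`, the two logarithms differ by
exactly `log θ`, and the inner integral becomes a quadratic polynomial in `u`, whose integral over
`[0,1]` is immediate.
-/

open Real

section SqrtSqAdd

variable {c : ℝ}

lemma add_sqrt_sq_add_pos (hc : 0 < c) (x : ℝ) : 0 < x + √(x ^ 2 + c) := by
  have : |x| < √(x ^ 2 + c) := by
    rw [← sqrt_sq_eq_abs]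
    exact sqrt_lt_sqrt (sq_nonneg x) (by linarith)
  linarith [neg_abs_le x]

lemma hasDerivAt_sqrt_sq_add (hc : 0 < c) (x : ℝ) :
    HasDerivAt (fun x => √(x ^ 2 + c)) (x / √(x ^ 2 + c)) x := by
  convert ((hasDerivAt_pow 2 x).add_const c).sqrt (by positivity) using 1
  field_simp
  norm_num [mul_comm]

lemma hasDerivAt_log_add_sqrt_sq_add (hc : 0 < c) (x : ℝ) :
    HasDerivAt (fun x => log (x + √(x ^ 2 + c))) (√(x ^ 2 + c))⁻¹ x := by
  have hpos := add_sqrt_sq_add_pos hc x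
  have h : HasDerivAt (fun x => x + √(x ^ 2 + c)) (1 + x / √(x ^ 2 + c)) x :=
    (hasDerivAt_id' x).add (hasDerivAt_sqrt_sq_add hc x)
  convert h.log hpos.ne' using 1
  have : 0 < √(x ^ 2 + c) := by positivity
  field_simp
  ring

lemma hasDerivAt_antideriv_sqrt_sq_add (hc : 0 < c) (x : ℝ) :
    HasDerivAt (fun x => (x * √(x ^ 2 + c) + c * log (x + √(x ^ 2 + c))) / 2)
      (√(x ^ 2 + c)) x := by
  refine ((((hasDerivAt_id' x).mul (hasDerivAt_sqrt_sq_add hc x)).add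
    ((hasDerivAt_log_add_sqrt_sq_add hc x).const_mul c)).div_const 2).congr_deriv ?_
  have : 0 < √(x ^ 2 + c) := by positivity
  field_simp
  rw [sq_sqrt (by positivity)]
  ring

theorem integral_sqrt_sq_add (hc : 0 < c) (a b : ℝ) :
    ∫ x in a..b, √(x ^ 2 + c) =
      (b * √(b ^ 2 + c) - a * √(a ^ 2 + c)
        + c * (log (b + √(b ^ 2 + c)) - log (a + √(a ^ 2 + c)))) / 2 := by
  rw [intervalIntegral.integral_eq_sub_of_hasDerivAt
    (fun x _ => hasDerivAt_antideriv_sqrt_sq_add hc x)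
    (by apply Continuous.intervalIntegrable; fun_prop)]
  ring

end SqrtSqAdd

lemma plackett_eq_sqrt_sq_add (θ u v : ℝ) :
    plackett θ u v = (1 + (θ - 1) * u + (θ - 1) * v
      - √(((θ - 1) * v + (1 - (θ + 1) * u)) ^ 2 + 4 * θ * u * (1 - u))) / (2 * (θ - 1)) := by
  rw [plackett]
  ring_nf

lemma integral_plackett_right {θ u : ℝ} (hθ : 0 < θ) (hθ1 : θ ≠ 1) (hu0 : 0 < u)
    (hu1 : u < 1) :
    ∫ v in (0:ℝ)..1, plackett θ u v
      = (2 * θ * u - (θ + 1) * u ^ 2) / (2 * (θ - 1))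
        - θ * log θ / (θ - 1) ^ 2 * (u * (1 - u)) := by
  have hη : θ - 1 ≠ 0 := sub_ne_zero.mpr hθ1
  have hm : 0 < 4 * θ * u * (1 - u) := by have := sub_pos.mpr hu1; positivity
  have hlin : ∫ v in (0:ℝ)..1, (1 + (θ - 1) * u + (θ - 1) * v)
      = 1 + (θ - 1) * u + (θ - 1) / 2 := by
    rw [intervalIntegral.integral_add intervalIntegrable_const
        (by apply Continuous.intervalIntegrable; fun_prop),
      intervalIntegral.integral_const_mul, integral_id]
    norm_num
    ring
  have hsqrt1 : √(((θ - 1) * 1 + (1 - (θ + 1) * u)) ^ 2 + 4 * θ * u * (1 - u))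
      = θ - (θ - 1) * u := by
    rw [← sqrt_sq (by nlinarith : 0 ≤ θ - (θ - 1) * u)]
    ring_nf
  have hsqrt0 : √(((θ - 1) * 0 + (1 - (θ + 1) * u)) ^ 2 + 4 * θ * u * (1 - u))
      = 1 + (θ - 1) * u := by
    rw [← sqrt_sq (by nlinarith : 0 ≤ 1 + (θ - 1) * u)]
    ring_nf
  have hlog : log ((θ - 1) * 1 + (1 - (θ + 1) * u) + (θ - (θ - 1) * u))
      - log ((θ - 1) * 0 + (1 - (θ + 1) * u) + (1 + (θ - 1) * u)) = log θ := by
    rw [show (θ - 1) * 1 + (1 - (θ + 1) * u) + (θ - (θ - 1) * u) = θ * (2 * (1 - u)) by ring,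
      log_mul hθ.ne' (by linarith)]
    ring_nf
  have hsqrt :
      ∫ v in (0:ℝ)..1, √(((θ - 1) * v + (1 - (θ + 1) * u)) ^ 2 + 4 * θ * u * (1 - u))
        = ((θ - (θ + 1) * u) * (θ - (θ - 1) * u) - (1 - (θ + 1) * u) * (1 + (θ - 1) * u)
            + 4 * θ * u * (1 - u) * log θ) / (2 * (θ - 1)) := by
    rw [intervalIntegral.integral_comp_mul_add (fun x => √(x ^ 2 + 4 * θ * u * (1 - u))) hη,
      integral_sqrt_sq_add hm, hsqrt1, hsqrt0, hlog, smul_eq_mul]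
    field_simp
    ring
  simp only [plackett_eq_sqrt_sq_add]
  rw [intervalIntegral.integral_div,
    intervalIntegral.integral_sub (by apply Continuous.intervalIntegrable; fun_prop)
      (by apply Continuous.intervalIntegrable; fun_prop),
    hlin, hsqrt]
  field_simp
  ring

lemma integral_zero_one_mul_add_mul_sq (a b : ℝ) :
    ∫ u in (0:ℝ)..1, (a * u + b * u ^ 2) = a / 2 + b / 3 := by
  rw [intervalIntegral.integral_add (by apply Continuous.intervalIntegrable; fun_prop)
      (by apply Continuous.intervalIntegrable; fun_prop),
    intervalIntegral.integral_const_mul, intervalIntegral.integral_const_mul, integral_id,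
    integral_pow]
  ring

/-- For the Plackett copula with `θ > 0`, `θ ≠ 1`, Spearman's rho
`ρ = 12 ∫∫ C_θ(u,v) du dv - 3` equals `(θ+1)/(θ-1) - 2θ log θ/(θ-1)²`. -/
theorem plackett_spearman_rho (θ : ℝ) (hθ : 0 < θ) (hθ1 : θ ≠ 1) :
    12 * (∫ u in (0:ℝ)..1, ∫ v in (0:ℝ)..1, plackett θ u v) - 3
      = (θ + 1) / (θ - 1) - 2 * θ * Real.log θ / (θ - 1) ^ 2 := by
  have hη : θ - 1 ≠ 0 := sub_ne_zero.mpr hθ1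
  have hquad : (∫ u in (0:ℝ)..1, ∫ v in (0:ℝ)..1, plackett θ u v)
      = ∫ u in (0:ℝ)..1, ((θ / (θ - 1) - θ * log θ / (θ - 1) ^ 2) * u
          + (θ * log θ / (θ - 1) ^ 2 - (θ + 1) / (2 * (θ - 1))) * u ^ 2) := by
    refine intervalIntegral.integral_congr_Ioo_of_le zero_le_one fun u hu => ?_
    rw [integral_plackett_right hθ hθ1 hu.1 hu.2]
    field_simp
    ring
  rw [hquad, integral_zero_one_mul_add_mul_sq]
  field_simp
  ring
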